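/- For directed posets P₁ and P₂, spec(P₁ × P₂) = spec(P₁) ∪ spec(P₂). -/

import Mathlib

open Cardinal Set

universe u v

/-- `C` is cofinal for `P'` in `P`: every element of `P'` lies below some element of `C`. -/
def IsCofinalFor' {P : Type u} [Preorder P] (P' C : Set P) : Prop :=
  ∀ p ∈ P', ∃ c ∈ C, p ≤ c

/-- `φ : P → Q` is a relative Tukey quotient from `(P', P)` to `(Q', Q)`:
it maps every subset of `P` cofinal for `P'` to a subset of `Q` cofinal for `Q'`. -/
def IsRelTukeyQuotient {P : Type u} {Q : Type v} [Preorder P] [Preorder Q]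
    (P' : Set P) (Q' : Set Q) (φ : P → Q) : Prop :=
  ∀ C : Set P, IsCofinalFor' P' C → IsCofinalFor' Q' (φ '' C)

/-- `(P', P) ≥_T (Q', Q)`: there exists a relative Tukey quotient. -/
def RelTukeyGE {P : Type u} {Q : Type v} [Preorder P] [Preorder Q]
    (P' : Set P) (Q' : Set Q) : Prop :=
  ∃ φ : P → Q, IsRelTukeyQuotient P' Q' φ

/-- `P ≥_T Q`: there is a Tukey quotient from `P` to `Q`. -/
def TukeyGE (P : Type u) (Q : Type v) [Preorder P] [Preorder Q] : Prop :=
  RelTukeyGE (Set.univ : Set P) (Set.univ : Set Q)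

/-- `A` is unbounded in `P`: it has no upper bound in `P`. -/
def UnboundedIn {P : Type u} [Preorder P] (A : Set P) : Prop :=
  ¬ ∃ b : P, ∀ a ∈ A, a ≤ b

/-- `spec(P)`: the set of regular cardinals `κ` with `P ≥_T κ`, where `κ` is viewed
as a poset with its usual (ordinal) order. -/
def specOf (P : Type u) [Preorder P] : Set Cardinal.{u} :=
  {κ : Cardinal.{u} | κ.IsRegular ∧ TukeyGE P κ.ord.ToType}

/-!
A Tukey quotient `P → Q` is the same as a Tukey map `Q → P` (one sending unbounded sets to
unbounded sets). Projections make each factor a Tukey quotient of the product, which gives `⊇`.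
For `⊆`, let `f : κ → P₁ × P₂` be a Tukey map. If `fst ∘ f` is not Tukey, some unbounded
`A ⊆ κ` has `fst (f A)` bounded. As `κ` is linearly ordered, `A` is cofinal, so some inflationary
`e : κ → A` exists, and `snd ∘ f ∘ e` is a Tukey map into `P₂`: the image of an unbounded set
under `f ∘ e` is unbounded, yet its first coordinates are bounded.
-/

universe w

def IsTukeyMap {P : Type u} {Q : Type v} [Preorder P] [Preorder Q] (f : Q → P) : Prop :=
  ∀ A : Set Q, UnboundedIn A → UnboundedIn (f '' A)

section Tukey

variable {P : Type u} {Q : Type v} {R : Type w} [Preorder P] [Preorder Q] [Preorder R]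

theorem TukeyGE.exists_isTukeyMap (h : TukeyGE P Q) : ∃ f : Q → P, IsTukeyMap f := by
  obtain ⟨φ, hφ⟩ := h
  -- otherwise `{c | ¬ q ≤ φ c}` is cofinal while its image misses `q`
  have above : ∀ q : Q, ∃ p : P, ∀ c, p ≤ c → q ≤ φ c := by
    intro q
    by_contra! hq
    have hcof : IsCofinalFor' univ {c : P | ¬ q ≤ φ c} := fun p _ ↦
      let ⟨c, hpc, hqc⟩ := hq p
      ⟨c, hqc, hpc⟩
    obtain ⟨_, ⟨c, hc, rfl⟩, hqc⟩ := hφ _ hcof q (mem_univ q)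
    exact hc hqc
  choose f hf using above
  exact ⟨f, fun A hA ⟨b, hb⟩ ↦ hA ⟨φ b, fun q hq ↦ hf q b (hb _ ⟨q, hq, rfl⟩)⟩⟩

theorem IsTukeyMap.tukeyGE {f : Q → P} (hf : IsTukeyMap f) : TukeyGE P Q := by
  have below : ∀ p : P, ∃ b : Q, ∀ q, f q ≤ p → q ≤ b := by
    intro p
    by_contra! hp
    refine hf {q | f q ≤ p} (fun ⟨b, hb⟩ ↦ ?_) ⟨p, ?_⟩
    · obtain ⟨q, hqp, hqb⟩ := hp b
      exact hqb (hb q hqp)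
    · rintro _ ⟨q, hq, rfl⟩
      exact hq
  choose φ hφ using below
  refine ⟨φ, fun C hC q _ ↦ ?_⟩
  obtain ⟨c, hc, hfc⟩ := hC (f q) (mem_univ _)
  exact ⟨φ c, ⟨c, hc, rfl⟩, hφ c q hfc⟩

theorem TukeyGE.trans (hPQ : TukeyGE P Q) (hQR : TukeyGE Q R) : TukeyGE P R := by
  obtain ⟨φ, hφ⟩ := hPQ
  obtain ⟨ψ, hψ⟩ := hQR
  refine ⟨ψ ∘ φ, fun C hC ↦ ?_⟩
  rw [image_comp]
  exact hψ _ (hφ C hC)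

end Tukey

section Product

variable {P₁ : Type u} {P₂ : Type v} [Preorder P₁] [Preorder P₂]

theorem tukeyGE_prod_fst [Nonempty P₂] : TukeyGE (P₁ × P₂) P₁ := by
  refine ⟨Prod.fst, fun C hC p _ ↦ ?_⟩
  obtain ⟨c, hc, hle⟩ := hC (p, Classical.arbitrary P₂) (mem_univ _)
  exact ⟨c.1, ⟨c, hc, rfl⟩, hle.1⟩

theorem tukeyGE_prod_snd [Nonempty P₁] : TukeyGE (P₁ × P₂) P₂ := by
  refine ⟨Prod.snd, fun C hC p _ ↦ ?_⟩
  obtain ⟨c, hc, hle⟩ := hC (Classical.arbitrary P₁, p) (mem_univ _)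
  exact ⟨c.2, ⟨c, hc, rfl⟩, hle.2⟩

theorem UnboundedIn.exists_ge {L : Type w} [LinearOrder L] {A : Set L} (hA : UnboundedIn A)
    (x : L) : ∃ a ∈ A, x ≤ a := by
  by_contra! hx
  exact hA ⟨x, fun a ha ↦ (hx a ha).le⟩

theorem UnboundedIn.image_of_le_self {e : P₁ → P₁} (he : ∀ x, x ≤ e x) {A : Set P₁}
    (hA : UnboundedIn A) : UnboundedIn (e '' A) :=
  fun ⟨b, hb⟩ ↦ hA ⟨b, fun a ha ↦ (he a).trans (hb _ ⟨a, ha, rfl⟩)⟩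

theorem tukeyGE_or_of_tukeyGE_prod {L : Type w} [LinearOrder L] (h : TukeyGE (P₁ × P₂) L) :
    TukeyGE P₁ L ∨ TukeyGE P₂ L := by
  obtain ⟨f, hf⟩ := h.exists_isTukeyMap
  by_cases h₁ : IsTukeyMap (Prod.fst ∘ f)
  · exact .inl h₁.tukeyGE
  obtain ⟨A, hA, b₁, hb₁⟩ : ∃ A, UnboundedIn A ∧ ∃ b₁, ∀ a ∈ A, (f a).1 ≤ b₁ := by
    simpa [IsTukeyMap, UnboundedIn] using h₁
  choose e heA hle using hA.exists_ge
  refine .inr (IsTukeyMap.tukeyGE (f := Prod.snd ∘ f ∘ e) fun U hU ⟨b₂, hb₂⟩ ↦ ?_)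
  refine hf _ (hU.image_of_le_self hle) ⟨(b₁, b₂), ?_⟩
  rintro _ ⟨_, ⟨u, hu, rfl⟩, rfl⟩
  exact ⟨hb₁ _ (heA u), hb₂ _ ⟨u, hu, rfl⟩⟩

end Product

theorem statement7 {P₁ P₂ : Type u} [PartialOrder P₁] [PartialOrder P₂]
    [Nonempty P₁] [Nonempty P₂] :
    specOf (P₁ × P₂) = specOf P₁ ∪ specOf P₂ := by
  ext κ
  constructor
  · rintro ⟨hreg, hT⟩
    exact (tukeyGE_or_of_tukeyGE_prod hT).imp (⟨hreg, ·⟩) (⟨hreg, ·⟩)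
  · rintro (⟨hreg, hT⟩ | ⟨hreg, hT⟩)
    · exact ⟨hreg, tukeyGE_prod_fst.trans hT⟩
    · exact ⟨hreg, tukeyGE_prod_snd.trans hT⟩
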